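/- Let x ∈ B^L, and partition {i : x_i = 0} into the maximal subsets I_ν whose induced subgraphs G_{I_ν} are connected (the connected components of the induced subgraph on {i : x_i = 0}). A fixed point y of N is reachable from x in the asynchronous dynamics of N if and only if for each part I_ν there is some i ∈ I_ν with y_i = 0. -/

import Mathlib

/-- One step of the fully asynchronous dynamics of a Boolean network `f`. -/
def asyncStep {ι : Type*} [DecidableEq ι] (f : (ι → Bool) → (ι → Bool))
    (x y : ι → Bool) : Prop :=
  ∃ i, f x i ≠ x i ∧ y = Function.update x i (!x i)

/-- A trap set: a set closed under the asynchronous dynamics. -/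
def isTrapSet {ι : Type*} [DecidableEq ι] (f : (ι → Bool) → (ι → Bool))
    (A : Set (ι → Bool)) : Prop :=
  ∀ x ∈ A, ∀ y, asyncStep f x y → y ∈ A

/-- The reduced Boolean Delta-Notch system over the cell graph `G`:
`N_i(n) = ⋁_{j ∈ S(i)} ¬ n_j`. -/
def Nsys {L : ℕ} (G : SimpleGraph (Fin L)) [DecidableRel G.Adj]
    (x : Fin L → Bool) : Fin L → Bool :=
  fun i => decide (∃ j, G.Adj i j ∧ x j = false)

/-!
A coordinate can turn `false` only when all its neighbours are `true`, so adjacent zeros of a state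
reached from `x` were already adjacent zeros of `x`; hence every zero component of `x` keeps a zero
along any trajectory. Conversely, as long as every zero component of `z` meets the zeros of the
fixed point `y`, a single step moves `z` one coordinate closer to `y` and keeps this property: if
`z` has zeros outside the zeros of `y`, set to `true` one that is farthest from them; otherwise set
to `false` a coordinate where `y` is `false`, whose neighbours are `true` in `y` and hence in `z`.
-/

open Function Relation

theorem Relation.reflTransGen_of_exists_step {α : Type*} {r : α → α → Prop} {P : α → Prop}
    {b : α} (μ : α → ℕ) (h : ∀ a, P a → a ≠ b → ∃ a', r a a' ∧ P a' ∧ μ a' < μ a) {a : α}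
    (ha : P a) : ReflTransGen r a b := by
  induction a using (measure μ).wf.induction with
  | h a ih =>
    by_cases hab : a = b
    · exact hab ▸ .refl
    obtain ⟨a', hr, ha', hlt⟩ := h a ha hab
    exact .head hr (ih a' hlt ha')

theorem hammingDist_update_lt {ι β : Type*} [Fintype ι] [DecidableEq ι] [DecidableEq β]
    {z y : ι → β} {i : ι} (h : z i ≠ y i) : hammingDist (update z i (y i)) y < hammingDist z y := by
  refine Finset.card_lt_card (Finset.ssubset_iff_of_subset ?_ |>.2 ⟨i, ?_, ?_⟩)
  · intro j hj
    by_cases hji : j = i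
    · simp_all
    · simpa [update_of_ne hji] using hj
  · simpa using h
  · simp

namespace SimpleGraph

variable {V : Type*} (G : SimpleGraph V)

def ReachableIn (s : Set V) (a b : V) : Prop :=
  ∃ p : G.Walk a b, ∀ v ∈ p.support, v ∈ s

def ComponentsMeet (s T : Set V) : Prop :=
  ∀ v ∈ s, ∃ t ∈ T, G.ReachableIn s v t

-- Junk value `0` when no walk inside `s` leads from `v` to `T`.
noncomputable def distIn (s T : Set V) (v : V) : ℕ :=
  sInf {n | ∃ t ∈ T, ∃ p : G.Walk v t, (∀ w ∈ p.support, w ∈ s) ∧ p.length = n}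

variable {G} {s T : Set V} {a b c : V}

theorem reachableIn_refl (ha : a ∈ s) : G.ReachableIn s a a :=
  ⟨.nil, by simpa using ha⟩

theorem ReachableIn.right_mem (h : G.ReachableIn s a b) : b ∈ s :=
  h.elim fun p hp => hp b p.end_mem_support

theorem ReachableIn.mono {s' : Set V} (h : G.ReachableIn s a b) (hs : s ⊆ s') :
    G.ReachableIn s' a b :=
  h.elim fun p hp => ⟨p, fun v hv => hs (hp v hv)⟩

theorem ReachableIn.concat (h : G.ReachableIn s a b) (hbc : G.Adj b c) (hc : c ∈ s) :
    G.ReachableIn s a c :=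
  h.elim fun p hp =>
    ⟨p.concat hbc, by simpa [Walk.support_concat, or_imp, forall_and, hc] using hp⟩

theorem reachableIn_iff_reachable_induce (ha : a ∈ s) (hb : b ∈ s) :
    G.ReachableIn s a b ↔ (G.induce s).Reachable ⟨a, ha⟩ ⟨b, hb⟩ := by
  refine ⟨fun ⟨p, hp⟩ => ⟨p.induce s hp⟩, fun ⟨q⟩ => ?_⟩
  -- Stated for arbitrary endpoints: those of the mapped walk are `a`, `b` only up to defeq.
  have hq : ∀ {a' b' : s} (q : (G.induce s).Walk a' b'),
      ∀ v ∈ (q.map (Embedding.induce s).toHom).support, v ∈ s := by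
    intro a' b' q v hv
    simp only [Walk.support_map, List.mem_map] at hv
    obtain ⟨w, -, rfl⟩ := hv
    exact w.2
  exact ⟨_, hq q⟩

theorem componentsMeet_iff_forall_reachable_induce :
    G.ComponentsMeet s T ↔
      ∀ v, ∀ hv : v ∈ s, ∃ t, ∃ ht : t ∈ s, (G.induce s).Reachable ⟨v, hv⟩ ⟨t, ht⟩ ∧ t ∈ T := by
  refine ⟨fun h v hv => ?_, fun h v hv => ?_⟩
  · obtain ⟨t, ht, hvt⟩ := h v hv
    exact ⟨t, hvt.right_mem, (reachableIn_iff_reachable_induce hv _).1 hvt, ht⟩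
  · obtain ⟨t, hts, hvt, ht⟩ := h v hv
    exact ⟨t, ht, (reachableIn_iff_reachable_induce hv hts).2 hvt⟩

theorem exists_walk_length_eq_distIn {v : V} (h : ∃ t ∈ T, G.ReachableIn s v t) :
    ∃ t ∈ T, ∃ p : G.Walk v t, (∀ w ∈ p.support, w ∈ s) ∧ p.length = G.distIn s T v := by
  obtain ⟨t, ht, p, hp⟩ := h
  exact Nat.sInf_mem
    (s := {n | ∃ t ∈ T, ∃ p : G.Walk v t, (∀ w ∈ p.support, w ∈ s) ∧ p.length = n})
    ⟨_, t, ht, p, hp, rfl⟩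

theorem distIn_le {v t : V} (ht : t ∈ T) (p : G.Walk v t) (hp : ∀ w ∈ p.support, w ∈ s) :
    G.distIn s T v ≤ p.length :=
  Nat.sInf_le ⟨t, ht, p, hp, rfl⟩

theorem distIn_lt_of_mem_support {u v t : V} {p : G.Walk v t} (ht : t ∈ T)
    (hp : ∀ w ∈ p.support, w ∈ s) (hlen : p.length = G.distIn s T v) (hu : u ∈ p.support)
    (huv : u ≠ v) : G.distIn s T u < G.distIn s T v := by
  classical
  have hdrop := distIn_le ht (p.dropUntil u hu)
    fun w hw => hp w (p.support_dropUntil_subset_support hu hw)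
  have htake : 0 < (p.takeUntil u hu).length :=
    Nat.pos_of_ne_zero fun h0 => huv (Walk.eq_of_length_eq_zero h0).symm
  have hsplit := congrArg Walk.length (p.take_spec hu)
  rw [Walk.length_append] at hsplit
  omega

theorem ComponentsMeet.insert {w : V} (h : G.ComponentsMeet s T) (hw : w ∈ T) :
    G.ComponentsMeet (insert w s) T := by
  rintro v (rfl | hv)
  · exact ⟨v, hw, reachableIn_refl (s.mem_insert v)⟩
  · obtain ⟨t, ht, hvt⟩ := h v hv
    exact ⟨t, ht, hvt.mono (s.subset_insert w)⟩

-- Delete a vertex of `s \ T` as far from `T` as possible: shortest walks to `T` from the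
-- remaining vertices cannot pass through it.
theorem ComponentsMeet.exists_diff_singleton [Finite V] (h : G.ComponentsMeet s T)
    (hne : (s \ T).Nonempty) :
    ∃ u ∈ s \ T, (∃ w ∈ s, G.Adj u w) ∧ G.ComponentsMeet (s \ {u}) T := by
  obtain ⟨u, hu, hmax⟩ := (s \ T).exists_max_image (G.distIn s T) (Set.toFinite _) hne
  refine ⟨u, hu, ?_, fun v hv => ?_⟩
  · obtain ⟨t, ht, p, hp, -⟩ := exists_walk_length_eq_distIn (h u hu.1)
    cases p with
    | nil => exact absurd ht hu.2
    | cons hadj q => exact ⟨_, hp _ (by simp), hadj⟩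
  by_cases hvT : v ∈ T
  · exact ⟨v, hvT, reachableIn_refl hv⟩
  obtain ⟨t, ht, p, hp, hlen⟩ := exists_walk_length_eq_distIn (h v hv.1)
  have hup : u ∉ p.support := fun hu' =>
    (distIn_lt_of_mem_support ht hp hlen hu' (Ne.symm hv.2)).not_ge (hmax v ⟨hv.1, hvT⟩)
  exact ⟨t, ht, p, fun w hw => ⟨hp w hw, by rintro rfl; exact hup hw⟩⟩

end SimpleGraph

theorem asyncStep_update {ι : Type*} [DecidableEq ι] {f : (ι → Bool) → ι → Bool}
    {z : ι → Bool} {i : ι} {b : Bool} (hf : f z i = b) (hz : z i ≠ b) :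
    asyncStep f z (update z i b) :=
  ⟨i, hf ▸ hz.symm, by rw [Bool.eq_not.2 hz.symm]⟩

section Nsys

variable {L : ℕ} {G : SimpleGraph (Fin L)} [DecidableRel G.Adj]

theorem nsys_eq_true_iff {z : Fin L → Bool} {i : Fin L} :
    Nsys G z i = true ↔ ∃ j, G.Adj i j ∧ z j = false :=
  decide_eq_true_iff

theorem nsys_eq_false_iff {z : Fin L → Bool} {i : Fin L} :
    Nsys G z i = false ↔ ∀ j, G.Adj i j → z j = true := by
  simp [Nsys]

theorem zero_of_asyncStep_of_adj {z z' : Fin L → Bool} (h : asyncStep (Nsys G) z z')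
    {a b : Fin L} (hab : G.Adj a b) (ha : z' a = false) (hb : z' b = false) : z a = false := by
  obtain ⟨k, hk, rfl⟩ := h
  by_cases hak : a = k
  · subst hak
    have hza : z a = true := by simpa using ha
    have hnbrs := nsys_eq_false_iff.1 (by simpa [hza] using hk) b hab
    simp [update_of_ne hab.ne.symm, hnbrs] at hb
  · simpa [update_of_ne hak] using ha

theorem zero_of_reflTransGen_of_adj {x z : Fin L → Bool}
    (h : ReflTransGen (asyncStep (Nsys G)) x z) {a b : Fin L} (hab : G.Adj a b)
    (ha : z a = false) (hb : z b = false) : x a = false := by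
  induction h generalizing a b with
  | refl => exact ha
  | tail _ hstep ih =>
    exact ih hab (zero_of_asyncStep_of_adj hstep hab ha hb)
      (zero_of_asyncStep_of_adj hstep hab.symm hb ha)

-- A coordinate turning from `false` to `true` has a `false` neighbour, and by
-- `zero_of_reflTransGen_of_adj` this edge already joins two zeros of `x`.
theorem componentsMeet_of_reflTransGen {x z : Fin L → Bool}
    (h : ReflTransGen (asyncStep (Nsys G)) x z) :
    G.ComponentsMeet {v | x v = false} {v | z v = false} := by
  induction h with
  | refl => exact fun v hv => ⟨v, hv, SimpleGraph.reachableIn_refl hv⟩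
  | @tail z z' hxz hstep ih =>
    intro i hi
    obtain ⟨j, hzj, hij⟩ := ih i hi
    rw [Set.mem_ofPred_eq] at hzj
    obtain ⟨k, hk, rfl⟩ := hstep
    by_cases hjk : j = k
    · subst hjk
      obtain ⟨m, hjm, hzm⟩ := nsys_eq_true_iff.1 (by simpa [hzj] using hk)
      have hxm : x m = false := zero_of_reflTransGen_of_adj hxz hjm.symm hzm hzj
      exact ⟨m, by simpa [update_of_ne hjm.ne.symm] using hzm, hij.concat hjm hxm⟩
    · exact ⟨j, by simpa [update_of_ne hjk] using hzj, hij⟩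

theorem exists_asyncStep_update_of_componentsMeet {y z : Fin L → Bool} (hy : Nsys G y = y)
    (hz : G.ComponentsMeet {v | z v = false} {v | y v = false}) (hne : z ≠ y) :
    ∃ i, z i ≠ y i ∧ asyncStep (Nsys G) z (update z i (y i)) ∧
      G.ComponentsMeet {v | update z i (y i) v = false} {v | y v = false} := by
  by_cases hout : ({v | z v = false} \ {v | y v = false}).Nonempty
  · obtain ⟨u, ⟨hzu, hyu⟩, ⟨w, hzw, huw⟩, hmeet⟩ := hz.exists_diff_singleton hout
    simp only [Set.mem_ofPred_eq, Bool.not_eq_false] at hzu hyu hzw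
    refine ⟨u, by simp [hzu, hyu], asyncStep_update ?_ (by simp [hzu, hyu]), ?_⟩
    · exact hyu ▸ nsys_eq_true_iff.2 ⟨w, huw, hzw⟩
    · convert hmeet using 2
      ext v
      by_cases hvu : v = u <;> simp_all [update_of_ne]
  · obtain ⟨w, hw⟩ := Function.ne_iff.1 hne
    have hsub : ∀ v, z v = false → y v = false := by
      simpa [Set.not_nonempty_iff_eq_empty, Set.sdiff_eq_empty, Set.subset_def] using hout
    have hyw : y w = false := by
      cases hzw : z w
      · exact absurd (hsub w hzw).symm (hzw ▸ hw)
      · simpa [hzw] using hw.symm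
    refine ⟨w, hw, asyncStep_update ?_ hw, ?_⟩
    · refine hyw ▸ nsys_eq_false_iff.2 fun j hwj => ?_
      have hyj := nsys_eq_false_iff.1 (hy ▸ hyw) j hwj
      cases hzj : z j
      · simp [hsub j hzj] at hyj
      · rfl
    · convert hz.insert hyw using 2
      ext v
      by_cases hvw : v = w <;> simp_all [update_of_ne]

theorem reflTransGen_of_componentsMeet {y z : Fin L → Bool} (hy : Nsys G y = y)
    (hz : G.ComponentsMeet {v | z v = false} {v | y v = false}) :
    ReflTransGen (asyncStep (Nsys G)) z y := by
  refine reflTransGen_of_exists_step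
    (P := fun z => G.ComponentsMeet {v | z v = false} {v | y v = false})
    (fun z => hammingDist z y) (fun z hz hne => ?_) hz
  obtain ⟨i, hi, hstep, hmeet⟩ := exists_asyncStep_update_of_componentsMeet hy hz hne
  exact ⟨_, hstep, hmeet, hammingDist_update_lt hi⟩

end Nsys

theorem stmt14_general {L : ℕ} (G : SimpleGraph (Fin L)) [DecidableRel G.Adj]
    (x y : Fin L → Bool) (hy : Nsys G y = y) :
    Relation.ReflTransGen (asyncStep (Nsys G)) x y ↔
      ∀ i, ∀ hi : i ∈ {v | x v = false},
        ∃ j, ∃ hj : j ∈ {v | x v = false},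
          (G.induce {v | x v = false}).Reachable ⟨i, hi⟩ ⟨j, hj⟩ ∧ y j = false := by
  calc _ ↔ G.ComponentsMeet {v | x v = false} {v | y v = false} :=
        ⟨componentsMeet_of_reflTransGen, reflTransGen_of_componentsMeet hy⟩
    _ ↔ _ := SimpleGraph.componentsMeet_iff_forall_reachable_induce

theorem stmt14 {L : ℕ} (G : SimpleGraph (Fin L)) [DecidableRel G.Adj]
    (hc : G.Connected) (x y : Fin L → Bool) (hy : Nsys G y = y) :
    Relation.ReflTransGen (asyncStep (Nsys G)) x y ↔
      ∀ i, ∀ hi : i ∈ {v | x v = false},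
        ∃ j, ∃ hj : j ∈ {v | x v = false},
          (G.induce {v | x v = false}).Reachable ⟨i, hi⟩ ⟨j, hj⟩ ∧ y j = false :=
  stmt14_general G x y hy
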